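/- Let z ∈ ℂ with Im z ≠ 0 and define h = -∂² + 2/(x - z)². Then ψ(x) = 1/(x - z) satisfies h ψ = 0, ψ ∈ L²(ℝ), and φ(x) = (x - z)/2 satisfies h φ = ψ, i.e., φ is an associated function of first order of h at spectral value 0. -/

import Mathlib

/-!
For every integer `n`, `h` maps `(x - z)^n` to `(2 - n(n - 1)) (x - z)^(n - 2)`. Taking `n = -1`
kills the prefactor, so `h ψ = 0`, and `n = 1` gives `h (x - z) = 2/(x - z)`, so `h φ = ψ`.
Square integrability holds because `|x - z|⁻² = ((x - Re z)² + (Im z)²)⁻¹` is a shifted and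
rescaled Lorentzian `(1 + t²)⁻¹`.
-/

open MeasureTheory

/-- The non-Hermitian Hamiltonian `h = -∂² + 2/(x - z)²`. -/
noncomputable def hSing (z : ℂ) (f : ℝ → ℂ) : ℝ → ℂ :=
  fun x => -(deriv (deriv f) x) + 2 / ((x : ℂ) - z) ^ 2 * f x

lemma hSing_const_mul (z c : ℂ) (f : ℝ → ℂ) (x : ℝ) :
    hSing z (fun y => c * f y) x = c * hSing z f x := by
  simp only [hSing, deriv_const_mul_field']
  ring

section OfRealSub

variable {z : ℂ}

lemma ofReal_sub_ne_zero (hz : z.im ≠ 0) (x : ℝ) : (x : ℂ) - z ≠ 0 := by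
  intro h
  exact hz (by simpa using congrArg Complex.im h)

lemma hasDerivAt_ofReal_sub_zpow (hz : z.im ≠ 0) (n : ℤ) (x : ℝ) :
    HasDerivAt (fun y : ℝ => ((y : ℂ) - z) ^ n) (n * ((x : ℂ) - z) ^ (n - 1)) x := by
  have h := (hasDerivAt_zpow n _ (.inl (ofReal_sub_ne_zero hz x))).comp (x : ℂ)
    ((hasDerivAt_id (x : ℂ)).sub_const z)
  simpa using h.comp_ofReal

lemma deriv_ofReal_sub_zpow (hz : z.im ≠ 0) (n : ℤ) :
    deriv (fun y : ℝ => ((y : ℂ) - z) ^ n) = fun y : ℝ => n * ((y : ℂ) - z) ^ (n - 1) :=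
  funext fun x => (hasDerivAt_ofReal_sub_zpow hz n x).deriv

lemma deriv_deriv_ofReal_sub_zpow (hz : z.im ≠ 0) (n : ℤ) :
    deriv (deriv fun y : ℝ => ((y : ℂ) - z) ^ n) =
      fun y : ℝ => n * (n - 1) * ((y : ℂ) - z) ^ (n - 2) := by
  rw [deriv_ofReal_sub_zpow hz, deriv_const_mul_field', deriv_ofReal_sub_zpow hz]
  funext y
  push_cast
  rw [show n - 1 - 1 = n - 2 by ring]
  ring

lemma hSing_ofReal_sub_zpow (hz : z.im ≠ 0) (n : ℤ) (x : ℝ) :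
    hSing z (fun y => ((y : ℂ) - z) ^ n) x = (2 - n * (n - 1)) * ((x : ℂ) - z) ^ (n - 2) := by
  have hx := ofReal_sub_ne_zero hz x
  simp only [hSing, deriv_deriv_ofReal_sub_zpow hz, zpow_sub₀ hx, zpow_two]
  field_simp
  ring

lemma sq_norm_ofReal_sub (x : ℝ) : ‖(x : ℂ) - z‖ ^ 2 = (x - z.re) ^ 2 + z.im ^ 2 := by
  rw [Complex.sq_norm, Complex.normSq_apply]
  simp only [Complex.sub_re, Complex.sub_im, Complex.ofReal_re, Complex.ofReal_im]
  ring

end OfRealSub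

lemma integrable_inv_sub_sq_add_sq (a : ℝ) {b : ℝ} (hb : b ≠ 0) :
    Integrable fun x : ℝ => ((x - a) ^ 2 + b ^ 2)⁻¹ := by
  refine ((integrable_inv_one_add_sq.comp_div hb).comp_sub_right a).const_mul (b ^ 2)⁻¹
    |>.congr (.of_forall fun x => ?_)
  field_simp
  ring

lemma memLp_two_inv_ofReal_sub {z : ℂ} (hz : z.im ≠ 0) :
    MemLp (fun x : ℝ => ((x : ℂ) - z)⁻¹) 2 volume := by
  have hcont : Continuous fun x : ℝ => ((x : ℂ) - z)⁻¹ :=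
    (Complex.continuous_ofReal.sub continuous_const).inv₀ (ofReal_sub_ne_zero hz)
  rw [memLp_two_iff_integrable_sq_norm hcont.aestronglyMeasurable]
  simpa only [norm_inv, inv_pow, sq_norm_ofReal_sub] using
    integrable_inv_sub_sq_add_sq z.re hz

/-- For `Im z ≠ 0`: `ψ = 1/(x - z)` satisfies `h ψ = 0`, is square integrable on `ℝ`,
and `φ = (x - z)/2` satisfies `h φ = ψ`, i.e. `φ` is a first-order associated function
of `h` at spectral value `0`. -/
theorem stmt_12 (z : ℂ) (hz : z.im ≠ 0) :
    (∀ x : ℝ, hSing z (fun y => 1 / ((y : ℂ) - z)) x = 0) ∧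
    MeasureTheory.MemLp (fun x : ℝ => 1 / ((x : ℂ) - z)) 2 MeasureTheory.volume ∧
    (∀ x : ℝ, hSing z (fun y => ((y : ℂ) - z) / 2) x = 1 / ((x : ℂ) - z)) := by
  have hψ : (fun y : ℝ => 1 / ((y : ℂ) - z)) = fun y : ℝ => ((y : ℂ) - z) ^ (-1 : ℤ) := by
    simp only [one_div, zpow_neg_one]
  have hφ : (fun y : ℝ => ((y : ℂ) - z) / 2) = fun y : ℝ => 2⁻¹ * ((y : ℂ) - z) ^ (1 : ℤ) := by
    simp only [zpow_one, div_eq_inv_mul]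
  refine ⟨fun x => ?_, ?_, fun x => ?_⟩
  · rw [hψ, hSing_ofReal_sub_zpow hz]
    norm_num
  · simpa only [one_div] using memLp_two_inv_ofReal_sub hz
  · rw [hφ, hSing_const_mul, hSing_ofReal_sub_zpow hz]
    norm_num
    ring
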